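/- Structure theorem for persistence modules: let k be a field and let M = ⊕_{i≥0} M_i be a finitely generated ℕ-graded module over the polynomial ring k[t], where t has degree 1. Then there exist natural numbers α_1,…,α_n and pairs of natural numbers (β_1,γ_1),…,(β_m,γ_m) with γ_j ≥ 1 such that M is isomorphic, as a graded k[t]-module, to (⊕_{i=1}^n Σ^{α_i} k[t]) ⊕ (⊕_{j=1}^m Σ^{β_j} k[t]/(t^{γ_j})), where Σ^a denotes shifting the grading up by a. -/

import Mathlib

/-- Degree `i` piece of the graded `k[t]`-module
`(⊕_{j=1}^n Σ^{α_j} k[t]) ⊕ (⊕_{j=1}^m Σ^{β_j} k[t]/(t^{γ_j}))`, viewed as a persistence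
module: the degree-`i` component of `Σ^{α_j} k[t]` is `k` iff `α_j ≤ i`, and the degree-`i`
component of `Σ^{β_j} k[t]/(t^{γ_j})` is `k` iff `β_j ≤ i < β_j + γ_j`. -/
abbrev IntervalSum (k : Type*) [Field k] (n m : ℕ) (α : Fin n → ℕ) (β γ : Fin m → ℕ)
    (i : ℕ) : Type _ :=
  ({j : Fin n // α j ≤ i} → k) × ({j : Fin m // β j ≤ i ∧ i < β j + γ j} → k)

/-- The structure map (multiplication by `t`) from the degree-`i` piece to the
degree-`(i+1)` piece of `IntervalSum`: the identity on coordinates whose interval contains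
both `i` and `i+1`, and zero into coordinates whose interval starts at `i+1`. -/
def intervalStep (k : Type*) [Field k] (n m : ℕ) (α : Fin n → ℕ) (β γ : Fin m → ℕ)
    (i : ℕ) : IntervalSum k n m α β γ i →ₗ[k] IntervalSum k n m α β γ (i + 1) :=
  LinearMap.prodMap
    (LinearMap.pi fun j : {j : Fin n // α j ≤ i + 1} =>
      if h : α j.1 ≤ i then LinearMap.proj (⟨j.1, h⟩ : {j : Fin n // α j ≤ i}) else 0)
    (LinearMap.pi fun j : {j : Fin m // β j ≤ i + 1 ∧ i + 1 < β j + γ j} =>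
      if h : β j.1 ≤ i ∧ i < β j.1 + γ j.1 then
        LinearMap.proj (⟨j.1, h⟩ : {j : Fin m // β j ≤ i ∧ i < β j + γ j}) else 0)

open Finset Submodule Module

lemma sum_dite_subtype' {ι V : Type*} [Fintype ι] [AddCommMonoid V]
    (p : ι → Prop) [DecidablePred p] (F : {i // p i} → V) :
    ∑ i : ι, (if h : p i then F ⟨i, h⟩ else 0) = ∑ j : {i // p i}, F j := by
  rw [← Finset.sum_filter_of_ne (s := univ) (p := p)
      (f := fun i => if h : p i then F ⟨i, h⟩ else 0)
      (by intro x _ h; by_contra hp; simp [hp] at h),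
    Finset.sum_subtype (p := p) (Finset.univ.filter p) (by simp)
      (fun i => if h : p i then F ⟨i, h⟩ else 0)]
  · exact Finset.sum_congr rfl fun x _ => by simp [x.2]

lemma span_top_of_triangular {k V κ : Type*} [Field k] [AddCommGroup V] [Module k V]
    [Fintype κ] (e : Basis κ k V) (v : κ → V) (o : κ → ℕ)
    (h : ∀ j, v j - e j ∈ span k (e '' {j' | o j' < o j})) :
    ⊤ ≤ span k (Set.range v) := by
  have key : ∀ N j, o j < N → e j ∈ span k (Set.range v) := by
    intro N
    induction N with
    | zero => omega
    | succ N ih =>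
      intro j hj
      have h1 : v j ∈ span k (Set.range v) := subset_span ⟨j, rfl⟩
      have h2 : v j - e j ∈ span k (Set.range v) := by
        refine span_le.2 ?_ (h j)
        rintro x ⟨j', hj', rfl⟩
        exact ih j' (by simp only [Set.mem_setOf_eq] at hj'; omega)
      have : e j = v j - (v j - e j) := by abel
      rw [this]; exact sub_mem h1 h2
  rw [← e.span_eq]
  refine span_le.2 ?_
  rintro x ⟨j, rfl⟩
  exact key (o j + 1) j (by omega)

lemma gaussian_elim {k V W κ : Type*} [Field k] [AddCommGroup V] [Module k V]
    [AddCommGroup W] [Module k W] [Fintype κ]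
    (f : V →ₗ[k] W) (e : Basis κ k V) (o : κ → ℕ) (ho : Function.Injective o) :
    ∃ c : κ → κ → k, (∀ j j', c j j' ≠ 0 → o j' < o j) ∧
      ∀ g : κ → W, (∀ j, g j = f (e j + ∑ j', c j j' • e j')) →
        LinearIndependent k (fun s : {j : κ // g j ≠ 0} => g s.1) := by
  classical
  set Wsp : κ → Submodule k W := fun j => span k ((fun t => f (e t)) '' {j' | o j' < o j})
    with hWsp
  have hex : ∀ j, ∃ d : κ → k, (∀ j', d j' ≠ 0 → o j' < o j) ∧
      (f (e j) ∈ Wsp j → f (e j) = ∑ j', d j' • f (e j')) ∧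
      (f (e j) ∉ Wsp j → d = 0) := by
    intro j
    by_cases hm : f (e j) ∈ Wsp j
    · obtain ⟨l, hl, hlc⟩ := (Finsupp.mem_span_image_iff_linearCombination k).1 hm
      refine ⟨⇑l, ?_, fun _ => ?_, fun hc => absurd hm hc⟩
      · intro j' hj'
        have : j' ∈ l.support := Finsupp.mem_support_iff.2 hj'
        exact hl this
      · rw [← hlc, Finsupp.linearCombination_apply, Finsupp.sum_fintype]
        simp
    · exact ⟨0, by simp, fun hc => absurd hc hm, fun _ => rfl⟩
  choose d hd1 hd2 hd3 using hex
  refine ⟨fun j j' => -(d j j'), fun j j' hc => hd1 j j' (by simpa using hc), ?_⟩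
  intro g hg
  have hfv : ∀ j, g j = f (e j) - ∑ j', d j j' • f (e j') := by
    intro j
    rw [hg j]
    simp [sub_eq_add_neg, ← Finset.sum_neg_distrib]
  have hzero : ∀ j, f (e j) ∈ Wsp j → g j = 0 := by
    intro j hm
    rw [hfv j, ← hd2 j hm, sub_self]
  have hne : ∀ j, g j ≠ 0 → g j = f (e j) ∧ f (e j) ∉ Wsp j := by
    intro j hgj
    by_cases hm : f (e j) ∈ Wsp j
    · exact absurd (hzero j hm) hgj
    · refine ⟨?_, hm⟩
      rw [hfv j, hd3 j hm]
      simp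
  have hWmem : ∀ j j₀, o j < o j₀ → g j ∈ Wsp j₀ := by
    intro j j₀ hlt
    rw [hfv j]
    refine sub_mem (subset_span ⟨j, hlt, rfl⟩) (sum_mem fun j' _ => ?_)
    by_cases hd : d j j' = 0
    · simp [hd]
    · exact smul_mem _ _ (subset_span ⟨j', by
        have := hd1 j j' hd; simp only [Set.mem_setOf_eq]; omega, rfl⟩)
  rw [Fintype.linearIndependent_iff]
  intro a ha
  by_contra hcon
  push_neg at hcon
  obtain ⟨s1, hs1⟩ := hcon
  have hTne : (univ.filter (fun s => a s ≠ 0)).Nonempty := ⟨s1, by simp [hs1]⟩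
  obtain ⟨s₀, hs₀T, hmax⟩ := Finset.exists_max_image _ (fun s => o s.1) hTne
  have has₀ : a s₀ ≠ 0 := by simpa using hs₀T
  have hsum : a s₀ • g s₀.1 + ∑ s ∈ univ.erase s₀, a s • g s.1 = 0 := by
    have h := Finset.add_sum_erase univ (fun s : {j // g j ≠ 0} => a s • g s.1)
      (Finset.mem_univ s₀)
    rw [h]; exact ha
  have hrest : ∑ s ∈ univ.erase s₀, a s • g s.1 ∈ Wsp s₀.1 := by
    refine sum_mem fun s hs => ?_
    by_cases has : a s = 0
    · simp [has]
    · refine smul_mem _ _ (hWmem s.1 s₀.1 ?_)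
      have hle : o s.1 ≤ o s₀.1 := hmax s (by simp [has])
      have hne' : s ≠ s₀ := (Finset.mem_erase.1 hs).1
      have : s.1 ≠ s₀.1 := fun hv => hne' (Subtype.ext hv)
      have : o s.1 ≠ o s₀.1 := fun hv => this (ho hv)
      omega
  have hmem : g s₀.1 ∈ Wsp s₀.1 := by
    have h1 : a s₀ • g s₀.1 ∈ Wsp s₀.1 := by
      have : a s₀ • g s₀.1 = -∑ s ∈ univ.erase s₀, a s • g s.1 := by
        rw [eq_neg_iff_add_eq_zero]; exact hsum
      rw [this]; exact neg_mem hrest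
    have := smul_mem (Wsp s₀.1) (a s₀)⁻¹ h1
    rwa [inv_smul_smul₀ has₀] at this
  exact ((hne s₀.1 s₀.2).2) (((hne s₀.1 s₀.2).1) ▸ hmem)

lemma exists_barcode {k : Type*} [Field k] {M : ℕ → Type*} [∀ i, AddCommGroup (M i)]
    [∀ i, Module k (M i)] (φ : ∀ i : ℕ, M i →ₗ[k] M (i + 1))
    (hfd : ∀ i, FiniteDimensional k (M i)) (L : ℕ) :
    ∃ (ι : Type) (_ : Fintype ι) (β γ : ι → ℕ),
      (∀ j, 1 ≤ γ j) ∧ (∀ j, β j + γ j ≤ L + 1) ∧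
      ∃ B : ∀ i, i ≤ L → Basis {j : ι // β j ≤ i ∧ i < β j + γ j} k (M i),
        ∀ (i : ℕ) (h : i + 1 ≤ L) (j : {j : ι // β j ≤ i ∧ i < β j + γ j}),
          φ i (B i (Nat.le_of_succ_le h) j) =
            if h' : β j.1 ≤ i + 1 ∧ i + 1 < β j.1 + γ j.1 then B (i+1) h ⟨j.1, h'⟩ else 0 := by
  classical
  induction L with
  | zero =>
    haveI := hfd 0
    refine ⟨Fin (finrank k (M 0)), inferInstance, fun _ => 0, fun _ => 1,
      fun _ => le_rfl, fun _ => le_rfl,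
      fun i hi => by
        obtain rfl : i = 0 := Nat.le_zero.1 hi
        exact (Module.finBasis k (M 0)).reindex (Equiv.subtypeUnivEquiv (fun _ => ⟨le_rfl, Nat.zero_lt_one⟩)).symm,
      fun i h => absurd h (by omega)⟩
  | succ L ih =>
    obtain ⟨ι, instι, β, γ, hγ1, hγ2, B, hB⟩ := ih
    -- order function
    let o : ι → ℕ := fun j => β j * Fintype.card ι + (Fintype.equivFin ι j : ℕ)
    have hkey : ∀ j j', β j < β j' → o j < o j' := by
      intro j j' hb
      have h1 : (Fintype.equivFin ι j : ℕ) < Fintype.card ι := (Fintype.equivFin ι j).isLt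
      have h2 : (β j + 1) * Fintype.card ι ≤ β j' * Fintype.card ι :=
        Nat.mul_le_mul_right _ hb
      calc o j < β j * Fintype.card ι + Fintype.card ι := by
            show β j * Fintype.card ι + _ < _; omega
        _ = (β j + 1) * Fintype.card ι := by ring
        _ ≤ β j' * Fintype.card ι := h2
        _ ≤ o j' := Nat.le_add_right _ _
    have ho1 : ∀ j j', o j' < o j → β j' ≤ β j := by
      intro j j' hlt
      by_contra hb
      have := hkey j j' (by omega)
      omega
    have hoinj : Function.Injective o := by
      intro j j' hjj
      have hb : β j = β j' := by
        rcases lt_trichotomy (β j) (β j') with h | h | h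
        · have := hkey j j' h; omega
        · exact h
        · have := hkey j' j h; omega
      have hv : (Fintype.equivFin ι j : ℕ) = (Fintype.equivFin ι j' : ℕ) := by
        have hjj' : β j * Fintype.card ι + (Fintype.equivFin ι j : ℕ)
            = β j' * Fintype.card ι + (Fintype.equivFin ι j' : ℕ) := hjj
        rw [hb] at hjj'
        omega
      exact (Fintype.equivFin ι).injective (Fin.val_injective hv)
    -- gaussian elimination at level L
    obtain ⟨c, hc, hcind⟩ := gaussian_elim (φ L) (B L le_rfl)
      (fun s : {j : ι // β j ≤ L ∧ L < β j + γ j} => o s.1)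
      (hoinj.comp Subtype.val_injective)
    -- the matrix on ι
    let ct : ι → ι → k := fun j j' =>
      if h : (β j ≤ L ∧ L < β j + γ j) ∧ (β j' ≤ L ∧ L < β j' + γ j') then
        c ⟨j, h.1⟩ ⟨j', h.2⟩ else 0
    have hctne : ∀ j j', ct j j' ≠ 0 →
        (β j ≤ L ∧ L < β j + γ j) ∧ (β j' ≤ L ∧ L < β j' + γ j') ∧
          o j' < o j ∧ β j' ≤ β j := by
      intro j j' hne
      by_cases hA : (β j ≤ L ∧ L < β j + γ j) ∧ (β j' ≤ L ∧ L < β j' + γ j')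
      · have hco : c ⟨j, hA.1⟩ ⟨j', hA.2⟩ ≠ 0 := by
          have : ct j j' = c ⟨j, hA.1⟩ ⟨j', hA.2⟩ := dif_pos hA
          rwa [this] at hne
        have := hc _ _ hco
        exact ⟨hA.1, hA.2, this, ho1 _ _ this⟩
      · exact absurd (dif_neg hA) hne
    have hctc : ∀ (s s' : {j : ι // β j ≤ L ∧ L < β j + γ j}), ct s.1 s'.1 = c s s' :=
      fun s s' => dif_pos ⟨s.2, s'.2⟩
    -- the modified families
    let v : ∀ i, i ≤ L → {j : ι // β j ≤ i ∧ i < β j + γ j} → M i := fun i hi j =>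
      B i hi j + ∑ j' : ι, if h : β j' ≤ i ∧ i < β j' + γ j' then
        ct j.1 j' • B i hi ⟨j', h⟩ else 0
    have htri : ∀ i (hi : i ≤ L) (j : {j : ι // β j ≤ i ∧ i < β j + γ j}),
        v i hi j - B i hi j ∈
          span k ((B i hi) '' {j' | o j'.1 < o j.1}) := by
      intro i hi j
      have : v i hi j - B i hi j = ∑ j' : ι, if h : β j' ≤ i ∧ i < β j' + γ j' then
          ct j.1 j' • B i hi ⟨j', h⟩ else 0 := add_sub_cancel_left _ _
      rw [this]
      refine sum_mem fun j' _ => ?_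
      by_cases h' : β j' ≤ i ∧ i < β j' + γ j'
      · rw [dif_pos h']
        by_cases hc0 : ct j.1 j' = 0
        · rw [hc0, zero_smul]; exact zero_mem _
        · exact smul_mem _ _ (subset_span ⟨⟨j', h'⟩, (hctne _ _ hc0).2.2.1, rfl⟩)
      · rw [dif_neg h']; exact zero_mem _
    have hcard : ∀ i (hi : i ≤ L),
        Fintype.card {j : ι // β j ≤ i ∧ i < β j + γ j} = finrank k (M i) := by
      intro i hi
      haveI := hfd i
      exact (Module.finrank_eq_card_basis (B i hi)).symm
    let B' : ∀ i, i ≤ L → Basis {j : ι // β j ≤ i ∧ i < β j + γ j} k (M i) := fun i hi =>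
      basisOfTopLeSpanOfCardEqFinrank (v i hi)
        (span_top_of_triangular (B i hi) (v i hi) (fun j => o j.1) (htri i hi))
        (hcard i hi)
    have hB'c : ∀ i (hi : i ≤ L), ⇑(B' i hi) = v i hi := fun i hi =>
      coe_basisOfTopLeSpanOfCardEqFinrank _ _ _
    -- the step property of v
    have hvstep : ∀ (i : ℕ) (h : i + 1 ≤ L) (j : {j : ι // β j ≤ i ∧ i < β j + γ j}),
        φ i (v i (Nat.le_of_succ_le h) j) =
          if h' : β j.1 ≤ i + 1 ∧ i + 1 < β j.1 + γ j.1 then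
            v (i + 1) h ⟨j.1, h'⟩ else 0 := by
      intro i h j
      show φ i (B i _ j + ∑ j' : ι, _) = _
      rw [map_add, map_sum, hB i h j]
      by_cases hj' : β j.1 ≤ i + 1 ∧ i + 1 < β j.1 + γ j.1
      · rw [dif_pos hj', dif_pos hj']
        show _ = B (i+1) h ⟨j.1, hj'⟩ + ∑ j' : ι, _
        congr 1
        refine Finset.sum_congr rfl fun j' _ => ?_
        by_cases hc0 : ct j.1 j' = 0
        · split_ifs with h1 h2 <;> simp [hc0]
        · obtain ⟨hAj, hAj', _, hbb⟩ := hctne _ _ hc0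
          have h1 : β j' ≤ i ∧ i < β j' + γ j' :=
            ⟨le_trans hbb j.2.1, by omega⟩
          have h2 : β j' ≤ i + 1 ∧ i + 1 < β j' + γ j' := ⟨by omega, by omega⟩
          rw [dif_pos h1, dif_pos h2, map_smul, hB i h ⟨j', h1⟩, dif_pos h2]
      · rw [dif_neg hj', dif_neg hj']
        have hnA : ¬(β j.1 ≤ L ∧ L < β j.1 + γ j.1) := by
          intro hA
          exact hj' ⟨by omega, by omega⟩
        have hct0 : ∀ j', ct j.1 j' = 0 := fun j' => dif_neg (fun hA => hnA hA.1)
        rw [Finset.sum_eq_zero, add_zero]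
        intro j' _
        by_cases h' : β j' ≤ i ∧ i < β j' + γ j'
        · rw [dif_pos h', hct0 j', zero_smul, map_zero]
        · rw [dif_neg h', map_zero]
    -- the boundary map images
    let g : {j : ι // β j ≤ L ∧ L < β j + γ j} → M (L + 1) := fun s => φ L (v L le_rfl s)
    have hvLe : ∀ j : {j : ι // β j ≤ L ∧ L < β j + γ j},
        v L le_rfl j = B L le_rfl j + ∑ j', c j j' • B L le_rfl j' := by
      intro j
      show B L le_rfl j + _ = _
      congr 1
      rw [sum_dite_subtype' (fun j' => β j' ≤ L ∧ L < β j' + γ j')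
        (fun s => ct j.1 s.1 • B L le_rfl s)]
      exact Finset.sum_congr rfl fun s _ => by rw [hctc]
    have hgind : LinearIndependent k
        (fun s : {s : {j : ι // β j ≤ L ∧ L < β j + γ j} // g s ≠ 0} => g s.1) := by
      refine hcind g fun j => ?_
      show φ L (v L le_rfl j) = _
      rw [hvLe j, map_add]
    -- extend to a basis of M (L + 1)
    haveI := hfd (L + 1)
    obtain ⟨Z', hZ'⟩ := Submodule.exists_isCompl
      (span k (Set.range fun s : {s : {j : ι // β j ≤ L ∧ L < β j + γ j} // g s ≠ 0} => g s.1))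
    let pZ := finrank k Z'
    let bZ : Basis (Fin pZ) k Z' := Module.finBasis k Z'
    let u : {s : {j : ι // β j ≤ L ∧ L < β j + γ j} // g s ≠ 0} ⊕ Fin pZ → M (L + 1) :=
      Sum.elim (fun s => g s.1) (fun t => (bZ t : M (L + 1)))
    have htopu : ⊤ ≤ span k (Set.range u) := by
      rw [Set.Sum.elim_range, span_union]
      have h1 : span k (Set.range fun t : Fin pZ => (bZ t : M (L + 1))) = Z' := by
        have h2 : Set.range (fun t : Fin pZ => (bZ t : M (L + 1))) =
            Z'.subtype '' Set.range bZ := by rw [← Set.range_comp]; rfl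
        rw [h2, span_image, bZ.span_eq, Submodule.map_top, Submodule.range_subtype]
      rw [h1, hZ'.sup_eq_top]
    have hcardu : Fintype.card
        ({s : {j : ι // β j ≤ L ∧ L < β j + γ j} // g s ≠ 0} ⊕ Fin pZ)
        = finrank k (M (L + 1)) := by
      rw [Fintype.card_sum, Fintype.card_fin]
      have h1 := finrank_span_eq_card hgind
      have h2 := Submodule.finrank_add_eq_of_isCompl hZ'
      omega
    let Bnew := basisOfTopLeSpanOfCardEqFinrank u htopu hcardu
    have hBnewc : ⇑Bnew = u := coe_basisOfTopLeSpanOfCardEqFinrank _ _ _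
    -- new index data
    let cont : ι → Prop := fun j => ∃ h : β j ≤ L ∧ L < β j + γ j, g ⟨j, h⟩ ≠ 0
    let β' : ι ⊕ Fin pZ → ℕ := Sum.elim β (fun _ => L + 1)
    let γ' : ι ⊕ Fin pZ → ℕ := Sum.elim (fun j => if cont j then γ j + 1 else γ j) (fun _ => 1)
    have hcontA : ∀ j, cont j → β j + γ j = L + 1 := by
      intro j hcj
      obtain ⟨hA, -⟩ := hcj
      have := hγ2 j
      omega
    have hfact1 : ∀ i, i ≤ L → ∀ j : ι,
        (β' (Sum.inl j) ≤ i ∧ i < β' (Sum.inl j) + γ' (Sum.inl j)) ↔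
          (β j ≤ i ∧ i < β j + γ j) := by
      intro i hi j
      show (β j ≤ i ∧ i < β j + (if cont j then γ j + 1 else γ j)) ↔ _
      by_cases hcj : cont j
      · have := hcontA j hcj
        rw [if_pos hcj]
        omega
      · rw [if_neg hcj]
    have hfact2 : ∀ i, i ≤ L → ∀ t : Fin pZ,
        ¬(β' (Sum.inr t) ≤ i ∧ i < β' (Sum.inr t) + γ' (Sum.inr t)) := by
      intro i hi t
      show ¬(L + 1 ≤ i ∧ _)
      omega
    have hfact3 : ∀ j : ι,
        (β' (Sum.inl j) ≤ L + 1 ∧ L + 1 < β' (Sum.inl j) + γ' (Sum.inl j)) ↔ cont j := by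
      intro j
      show (β j ≤ L + 1 ∧ L + 1 < β j + (if cont j then γ j + 1 else γ j)) ↔ _
      by_cases hcj : cont j
      · have := hcontA j hcj
        rw [if_pos hcj]
        constructor
        · intro _; exact hcj
        · intro _; omega
      · rw [if_neg hcj]
        have := hγ2 j
        constructor
        · intro hcon; omega
        · intro hcon; exact absurd hcon hcj
    have hfact4 : ∀ t : Fin pZ,
        β' (Sum.inr t) ≤ L + 1 ∧ L + 1 < β' (Sum.inr t) + γ' (Sum.inr t) := by
      intro t
      show L + 1 ≤ L + 1 ∧ L + 1 < L + 1 + 1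
      omega
    -- index equivalences
    let eOld : ∀ i, (hi : i ≤ L) → {j : ι // β j ≤ i ∧ i < β j + γ j} ≃
        {j' : ι ⊕ Fin pZ // β' j' ≤ i ∧ i < β' j' + γ' j'} := fun i hi =>
      { toFun := fun j => ⟨Sum.inl j.1, (hfact1 i hi j.1).2 j.2⟩
        invFun := fun y => match y with
          | ⟨Sum.inl j, hy⟩ => ⟨j, (hfact1 i hi j).1 hy⟩
          | ⟨Sum.inr t, hy⟩ => absurd hy (hfact2 i hi t)
        left_inv := fun j => rfl
        right_inv := fun y => by
          rcases y with ⟨j | t, hy⟩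
          · rfl
          · exact absurd hy (hfact2 i hi t) }
    have heNewbij : Function.Bijective
        (Sum.elim
          (fun s : {s : {j : ι // β j ≤ L ∧ L < β j + γ j} // g s ≠ 0} =>
            (⟨Sum.inl s.1.1, (hfact3 s.1.1).2 ⟨s.1.2, s.2⟩⟩ :
              {j' : ι ⊕ Fin pZ // β' j' ≤ L + 1 ∧ L + 1 < β' j' + γ' j'}))
          (fun t : Fin pZ => ⟨Sum.inr t, hfact4 t⟩)) := by
      constructor
      · rintro (⟨⟨a, ha⟩, hga⟩ | ta) (⟨⟨b, hb⟩, hgb⟩ | tb) hxy <;>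
          simp only [Sum.elim_inl, Sum.elim_inr, Subtype.mk.injEq, Sum.inl.injEq,
            Sum.inr.injEq, reduceCtorEq] at hxy
        · simp only [Sum.inl.injEq, Subtype.mk.injEq]
          exact hxy
        · simp only [Sum.inr.injEq]
          exact hxy
      · rintro ⟨j | t, hy⟩
        · have hcj : cont j := (hfact3 j).1 hy
          obtain ⟨hA, hgne⟩ := hcj
          exact ⟨Sum.inl ⟨⟨j, hA⟩, hgne⟩, Subtype.ext rfl⟩
        · exact ⟨Sum.inr t, Subtype.ext rfl⟩
    let eNew := Equiv.ofBijective _ heNewbij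
    -- assembled bases
    let B2 : ∀ i, i ≤ L + 1 → Basis {j' : ι ⊕ Fin pZ // β' j' ≤ i ∧ i < β' j' + γ' j'}
        k (M i) := fun i hi =>
      if h : i ≤ L then (B' i h).reindex (eOld i h)
      else by
        obtain rfl : i = L + 1 := by omega
        exact Bnew.reindex eNew
    refine ⟨ι ⊕ Fin pZ, inferInstance, β', γ', ?_, ?_, B2, ?_⟩
    · rintro (j | t)
      · show 1 ≤ if cont j then γ j + 1 else γ j
        have := hγ1 j
        split_ifs <;> omega
      · exact le_rfl
    · rintro (j | t)
      · show β j + (if cont j then γ j + 1 else γ j) ≤ L + 2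
        have := hγ2 j
        split_ifs with hcj
        · have := hcontA j hcj; omega
        · omega
      · show L + 1 + 1 ≤ L + 2
        omega
    · intro i h jj
      have hiL : i ≤ L := by omega
      have hB2i : B2 i (Nat.le_of_succ_le h) = (B' i hiL).reindex (eOld i hiL) := dif_pos hiL
      rcases jj with ⟨j | t, hj'⟩
      · have hjA : β j ≤ i ∧ i < β j + γ j := (hfact1 i hiL j).1 hj'
        have hlhs : φ i (B2 i (Nat.le_of_succ_le h) ⟨Sum.inl j, hj'⟩) =
            φ i (v i hiL ⟨j, hjA⟩) := by
          rw [hB2i, Basis.reindex_apply]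
          congr 1
          show (B' i hiL) ⟨j, _⟩ = _
          rw [hB'c]
        rw [hlhs]
        by_cases hcase : i + 1 ≤ L
        · rw [hvstep i hcase ⟨j, hjA⟩]
          by_cases halive : β j ≤ i + 1 ∧ i + 1 < β j + γ j
          · rw [dif_pos halive, dif_pos ((hfact1 (i+1) hcase j).2 halive)]
            have hB2s : B2 (i+1) h = (B' (i+1) hcase).reindex (eOld (i+1) hcase) :=
              dif_pos hcase
            rw [hB2s, Basis.reindex_apply]
            show _ = (B' (i+1) hcase) ⟨j, _⟩
            rw [hB'c]
          · rw [dif_neg halive,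
              dif_neg (fun hcon => halive ((hfact1 (i+1) hcase j).1 hcon))]
        · obtain rfl : L = i := by omega
          have hlhs2 : φ L (v L hiL ⟨j, hjA⟩) = g ⟨j, hjA⟩ := rfl
          rw [hlhs2]
          have hB2top : B2 (L + 1) h = Bnew.reindex eNew := by
            have hd : ¬(L + 1 ≤ L) := by omega
            exact dif_neg hd
          by_cases hcj : cont j
          · rw [dif_pos ((hfact3 j).2 hcj), hB2top, Basis.reindex_apply]
            obtain ⟨hA, hgne⟩ := hcj
            have heq : eNew (Sum.inl ⟨⟨j, hA⟩, hgne⟩) =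
                ⟨Sum.inl j, (hfact3 j).2 ⟨hA, hgne⟩⟩ := Subtype.ext rfl
            have hsymm : eNew.symm ⟨Sum.inl j, (hfact3 j).2 ⟨hA, hgne⟩⟩ =
                Sum.inl ⟨⟨j, hA⟩, hgne⟩ := by
              rw [← heq, Equiv.symm_apply_apply]
            rw [hsymm, hBnewc]  -- hope proofs align
            rfl
          · rw [dif_neg (fun hcon => hcj ((hfact3 j).1 hcon))]
            by_contra hne'
            exact hcj ⟨hjA, hne'⟩
      · exact absurd hj' (hfact2 i hiL t)

lemma intervalStep_fst {k : Type*} [Field k] {n m : ℕ} {α : Fin n → ℕ} {β γ : Fin m → ℕ}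
    {i : ℕ} (x : IntervalSum k n m α β γ i) (s : {j : Fin n // α j ≤ i + 1}) :
    (intervalStep k n m α β γ i x).1 s = if h : α s.1 ≤ i then x.1 ⟨s.1, h⟩ else 0 := by
  simp only [intervalStep, LinearMap.prodMap_apply, LinearMap.pi_apply]
  split_ifs with h
  · rfl
  · rfl

lemma intervalStep_snd {k : Type*} [Field k] {n m : ℕ} {α : Fin n → ℕ} {β γ : Fin m → ℕ}
    {i : ℕ} (x : IntervalSum k n m α β γ i)
    (s : {j : Fin m // β j ≤ i + 1 ∧ i + 1 < β j + γ j}) :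
    (intervalStep k n m α β γ i x).2 s =
      if h : β s.1 ≤ i ∧ i < β s.1 + γ s.1 then x.2 ⟨s.1, h⟩ else 0 := by
  simp only [intervalStep, LinearMap.prodMap_apply, LinearMap.pi_apply]
  split_ifs with h
  · rfl
  · rfl

/-- Structure theorem for persistence modules: a persistence module of finite type over a
field `k` — a family of finite-dimensional `k`-vector spaces `M_i` with linear maps
`φ_i : M_i → M_{i+1}`, identified with a finitely generated ℕ-graded `k[t]`-module (finite
generation being equivalent to each `M_i` finite-dimensional and `φ_i` surjective for all
large `i`) — decomposes as a graded `k[t]`-module into free and torsion interval summands: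
`M ≅ (⊕_{i=1}^n Σ^{α_i} k[t]) ⊕ (⊕_{j=1}^m Σ^{β_j} k[t]/(t^{γ_j}))` with `γ_j ≥ 1`,
i.e. there are degreewise isomorphisms commuting with the structure maps. -/
theorem persistence_module_structure (k : Type*) [Field k]
    (M : ℕ → Type*) [∀ i, AddCommGroup (M i)] [∀ i, Module k (M i)]
    (φ : ∀ i : ℕ, M i →ₗ[k] M (i + 1))
    (hfd : ∀ i, FiniteDimensional k (M i))
    (hfg : ∃ N : ℕ, ∀ i ≥ N, Function.Surjective (φ i)) :
    ∃ (n m : ℕ) (α : Fin n → ℕ) (β γ : Fin m → ℕ) (_ : ∀ j, 1 ≤ γ j)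
      (ψ : ∀ i : ℕ, M i ≃ₗ[k] IntervalSum k n m α β γ i),
      ∀ (i : ℕ) (x : M i),
        ψ (i + 1) (φ i x) = intervalStep k n m α β γ i (ψ i x) := by
  classical
  obtain ⟨N, hN⟩ := hfg
  -- stabilization
  have hmono : ∀ i j, N ≤ i → i ≤ j → finrank k (M j) ≤ finrank k (M i) := by
    intro i j hNi hij
    induction j, hij using Nat.le_induction with
    | base => exact le_rfl
    | succ j hij ih =>
      refine le_trans ?_ ih
      have hs := hN j (by omega)
      haveI := hfd j
      have h1 := LinearMap.finrank_range_add_finrank_ker (φ j)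
      rw [LinearMap.range_eq_top.2 hs, finrank_top] at h1
      omega
  obtain ⟨Lw, hLwN, hLwd⟩ : ∃ i, N ≤ i ∧ finrank k (M i) =
      sInf {q | ∃ i, N ≤ i ∧ finrank k (M i) = q} :=
    Nat.sInf_mem (s := {q | ∃ i, N ≤ i ∧ finrank k (M i) = q}) ⟨finrank k (M N), N, le_rfl, rfl⟩
  have hconst : ∀ i, Lw ≤ i → finrank k (M i) = finrank k (M Lw) := by
    intro i hi
    refine le_antisymm (hmono Lw i hLwN hi) ?_
    rw [hLwd]
    exact Nat.sInf_le ⟨i, hLwN.trans hi, rfl⟩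
  have hbij : ∀ i, Lw ≤ i → Function.Bijective (φ i) := by
    intro i hi
    have hs := hN i (by omega)
    refine ⟨?_, hs⟩
    haveI := hfd i
    have h1 := LinearMap.finrank_range_add_finrank_ker (φ i)
    rw [LinearMap.range_eq_top.2 hs, finrank_top] at h1
    have h2 : finrank k (M (i+1)) = finrank k (M i) := by
      rw [hconst i hi, hconst (i+1) (by omega)]
    have h3 : finrank k (LinearMap.ker (φ i)) = 0 := by omega
    exact LinearMap.ker_eq_bot.1 (Submodule.finrank_eq_zero.1 h3)
  obtain ⟨ι, instι, β, γ, hγ1, hγ2, B, hB⟩ := exists_barcode φ hfd Lw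
  -- free / torsion split
  let n := Fintype.card {j : ι // β j + γ j = Lw + 1}
  let m := Fintype.card {j : ι // β j + γ j ≤ Lw}
  let efree := (Fintype.equivFin {j : ι // β j + γ j = Lw + 1}).symm
  let etors := (Fintype.equivFin {j : ι // β j + γ j ≤ Lw}).symm
  let αf : Fin n → ℕ := fun s => β (efree s).1
  let βt : Fin m → ℕ := fun s => β (etors s).1
  let γt : Fin m → ℕ := fun s => γ (etors s).1
  have hαLe : ∀ s, αf s ≤ Lw := by
    intro s
    have h1 := (efree s).2
    have h2 := hγ1 (efree s).1
    show β (efree s).1 ≤ Lw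
    omega
  -- the index equivalence at times i ≤ Lw
  let E : ∀ i, i ≤ Lw →
      (({s : Fin n // αf s ≤ i} ⊕ {s : Fin m // βt s ≤ i ∧ i < βt s + γt s}) ≃
        {j : ι // β j ≤ i ∧ i < β j + γ j}) := fun i hi =>
    { toFun := Sum.elim
        (fun s => ⟨(efree s.1).1, ⟨s.2, by have := (efree s.1).2; omega⟩⟩)
        (fun s => ⟨(etors s.1).1, s.2⟩)
      invFun := fun j =>
        if h : β j.1 + γ j.1 = Lw + 1 then
          Sum.inl ⟨efree.symm ⟨j.1, h⟩, by
            show β (efree (efree.symm ⟨j.1, h⟩)).1 ≤ i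
            rw [Equiv.apply_symm_apply]
            exact j.2.1⟩
        else
          Sum.inr ⟨etors.symm ⟨j.1, by have := hγ2 j.1; omega⟩, by
            show β (etors (etors.symm _)).1 ≤ i ∧ i < β (etors (etors.symm _)).1 +
              γ (etors (etors.symm _)).1
            rw [Equiv.apply_symm_apply]
            exact j.2⟩
      left_inv := by
        rintro (s | s)
        · simp only [Sum.elim_inl]
          erw [dif_pos (efree s.1).2]
          congr 1
          refine Subtype.ext ?_
          show efree.symm ⟨(efree s.1).1, _⟩ = s.1
          rw [show (⟨(efree s.1).1, _⟩ : {j : ι // β j + γ j = Lw + 1}) = efree s.1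
              from Subtype.ext rfl, Equiv.symm_apply_apply]
        · simp only [Sum.elim_inr]
          erw [dif_neg (show ¬(β (etors s.1).1 + γ (etors s.1).1 = Lw + 1) by
            have := (etors s.1).2; omega)]
          congr 1
          refine Subtype.ext ?_
          show etors.symm ⟨(etors s.1).1, _⟩ = s.1
          rw [show (⟨(etors s.1).1, _⟩ : {j : ι // β j + γ j ≤ Lw}) = etors s.1
              from Subtype.ext rfl, Equiv.symm_apply_apply]
      right_inv := by
        intro j
        beta_reduce
        by_cases hj : β j.1 + γ j.1 = Lw + 1
        · rw [dif_pos hj]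
          simp only [Sum.elim_inl]
          refine Subtype.ext ?_
          show (efree (efree.symm ⟨j.1, hj⟩)).1 = j.1
          rw [Equiv.apply_symm_apply]
        · rw [dif_neg hj]
          simp only [Sum.elim_inr]
          refine Subtype.ext ?_
          show (etors (etors.symm ⟨j.1, _⟩)).1 = j.1
          rw [Equiv.apply_symm_apply] }
  -- first form of the isomorphisms
  let psi : ∀ i, i ≤ Lw → (M i ≃ₗ[k] IntervalSum k n m αf βt γt i) := fun i hi =>
    (B i hi).equivFun.trans ((LinearEquiv.funCongrLeft k k (E i hi)).trans
      (LinearEquiv.sumArrowLequivProdArrow _ _ k k))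
  have hψ1 : ∀ i (hi : i ≤ Lw) (x : M i) (s : {s : Fin n // αf s ≤ i}),
      (psi i hi x).1 s = (B i hi).repr x ((E i hi) (Sum.inl s)) := fun i hi x s => rfl
  have hψ2 : ∀ i (hi : i ≤ Lw) (x : M i) (s : {s : Fin m // βt s ≤ i ∧ i < βt s + γt s}),
      (psi i hi x).2 s = (B i hi).repr x ((E i hi) (Sum.inr s)) := fun i hi x s => rfl
  -- the torsion part dies at times ≥ Lw
  have hTempty : ∀ i, Lw ≤ i → IsEmpty {s : Fin m // βt s ≤ i ∧ i < βt s + γt s} := by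
    intro i hi
    refine ⟨fun s => ?_⟩
    have h1 := (etors s.1).2
    have h2 := s.2
    have h3 : βt s.1 + γt s.1 = β (etors s.1).1 + γ (etors s.1).1 := rfl
    omega
  -- the step equivalence at times ≥ Lw
  let stepE : ∀ i, Lw ≤ i →
      (IntervalSum k n m αf βt γt i ≃ₗ[k] IntervalSum k n m αf βt γt (i + 1)) := fun i hi =>
    LinearEquiv.prodCongr
      (LinearEquiv.funCongrLeft k k (Equiv.subtypeEquivRight
        (fun s => ⟨fun _ => (hαLe s).trans hi, fun _ => (hαLe s).trans (by omega)⟩)))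
      (LinearEquiv.funCongrLeft k k
        (@Equiv.equivOfIsEmpty _ _ (hTempty (i+1) (by omega)) (hTempty i hi)))
  have hstepE : ∀ i (hi : Lw ≤ i) (x : IntervalSum k n m αf βt γt i),
      stepE i hi x = intervalStep k n m αf βt γt i x := by
    intro i hi x
    refine Prod.ext ?_ ?_
    · funext s
      rw [intervalStep_fst, dif_pos ((hαLe s.1).trans hi)]
      rfl
    · funext s
      exact ((hTempty (i+1) (by omega)).false s).elim
  -- the key commutation at times < Lw
  have key1 : ∀ (i : ℕ) (h : i + 1 ≤ Lw) (x : M i),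
      psi (i+1) h (φ i x) =
        intervalStep k n m αf βt γt i (psi i (Nat.le_of_succ_le h) x) := by
    intro i h x
    have hbase : ∀ jj : {j : ι // β j ≤ i ∧ i < β j + γ j},
        ((psi (i+1) h).toLinearMap.comp (φ i)) (B i (Nat.le_of_succ_le h) jj) =
        ((intervalStep k n m αf βt γt i).comp
          (psi i (Nat.le_of_succ_le h)).toLinearMap) (B i (Nat.le_of_succ_le h) jj) := by
      intro jj
      show psi (i+1) h (φ i (B i (Nat.le_of_succ_le h) jj)) =
        intervalStep k n m αf βt γt i (psi i (Nat.le_of_succ_le h)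
          (B i (Nat.le_of_succ_le h) jj))
      rw [hB i h jj]
      refine Prod.ext ?_ ?_
      · funext s
        rw [intervalStep_fst]
        by_cases halive : β jj.1 ≤ i + 1 ∧ i + 1 < β jj.1 + γ jj.1
        · rw [dif_pos halive, hψ1, Basis.repr_self, Finsupp.single_apply]
          by_cases hjs : jj.1 = (efree s.1).1
          · have hfs := (efree s.1).2
            have h2 : αf s.1 ≤ i := by
              show β (efree s.1).1 ≤ i
              rw [← hjs]; exact jj.2.1
            rw [dif_pos h2, hψ1, Basis.repr_self, Finsupp.single_apply,
              if_pos (Subtype.ext hjs : (⟨jj.1, halive⟩ :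
                {j : ι // β j ≤ i + 1 ∧ i + 1 < β j + γ j}) = _),
              if_pos (Subtype.ext hjs : jj = _)]
          · rw [if_neg (show ¬((⟨jj.1, halive⟩ : {j : ι // β j ≤ i + 1 ∧ i + 1 < β j + γ j}) =
                (E (i+1) h) (Sum.inl s)) from fun hcon => hjs (congrArg Subtype.val hcon))]
            by_cases h2 : αf s.1 ≤ i
            · rw [dif_pos h2, hψ1, Basis.repr_self, Finsupp.single_apply,
                if_neg (show ¬(jj = (E i (Nat.le_of_succ_le h)) (Sum.inl ⟨s.1, h2⟩))
                  from fun hcon => hjs (congrArg Subtype.val hcon))]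
            · rw [dif_neg h2]
        · rw [dif_neg halive, map_zero]
          have hlz : (0 : IntervalSum k n m αf βt γt (i+1)).1 s = 0 := rfl
          rw [hlz]
          by_cases h2 : αf s.1 ≤ i
          · rw [dif_pos h2, hψ1, Basis.repr_self, Finsupp.single_apply, if_neg]
            intro hcon
            have hjs : jj.1 = (efree s.1).1 := congrArg Subtype.val hcon
            have hfs := (efree s.1).2
            rw [← hjs] at hfs
            exact halive ⟨by omega, by omega⟩
          · rw [dif_neg h2]
      · funext s
        rw [intervalStep_snd]
        have hts : βt s.1 = β (etors s.1).1 ∧ γt s.1 = γ (etors s.1).1 := ⟨rfl, rfl⟩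
        by_cases halive : β jj.1 ≤ i + 1 ∧ i + 1 < β jj.1 + γ jj.1
        · rw [dif_pos halive, hψ2, Basis.repr_self, Finsupp.single_apply]
          by_cases hjs : jj.1 = (etors s.1).1
          · have h2 : βt s.1 ≤ i ∧ i < βt s.1 + γt s.1 := by
              have hs2 := s.2
              have : β jj.1 = βt s.1 ∧ γ jj.1 = γt s.1 := by
                rw [hts.1, hts.2, hjs]; exact ⟨rfl, rfl⟩
              have hj2 := jj.2
              omega
            rw [dif_pos h2, hψ2, Basis.repr_self, Finsupp.single_apply,
              if_pos (Subtype.ext hjs : (⟨jj.1, halive⟩ :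
                {j : ι // β j ≤ i + 1 ∧ i + 1 < β j + γ j}) = _),
              if_pos (Subtype.ext hjs : jj = _)]
          · rw [if_neg (show ¬((⟨jj.1, halive⟩ : {j : ι // β j ≤ i + 1 ∧ i + 1 < β j + γ j}) =
                (E (i+1) h) (Sum.inr s)) from fun hcon => hjs (congrArg Subtype.val hcon))]
            by_cases h2 : βt s.1 ≤ i ∧ i < βt s.1 + γt s.1
            · rw [dif_pos h2, hψ2, Basis.repr_self, Finsupp.single_apply,
                if_neg (show ¬(jj = (E i (Nat.le_of_succ_le h)) (Sum.inr ⟨s.1, h2⟩))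
                  from fun hcon => hjs (congrArg Subtype.val hcon))]
            · rw [dif_neg h2]
        · rw [dif_neg halive, map_zero]
          have hlz : (0 : IntervalSum k n m αf βt γt (i+1)).2 s = 0 := rfl
          rw [hlz]
          by_cases h2 : βt s.1 ≤ i ∧ i < βt s.1 + γt s.1
          · rw [dif_pos h2, hψ2, Basis.repr_self, Finsupp.single_apply, if_neg]
            intro hcon
            have hjs : jj.1 = (etors s.1).1 := congrArg Subtype.val hcon
            have hs2 := s.2
            have : β jj.1 = βt s.1 ∧ γ jj.1 = γt s.1 := by
              rw [hts.1, hts.2, hjs]; exact ⟨rfl, rfl⟩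
            exact halive ⟨by omega, by omega⟩
          · rw [dif_neg h2]
    exact LinearMap.congr_fun (Module.Basis.ext (B i (Nat.le_of_succ_le h)) hbase) x
  -- assemble the isomorphisms for all i
  let Ψstep : ∀ i, (M i ≃ₗ[k] IntervalSum k n m αf βt γt i) →
      (M (i+1) ≃ₗ[k] IntervalSum k n m αf βt γt (i+1)) := fun i ih =>
    if h : i + 1 ≤ Lw then psi (i+1) h
    else (LinearEquiv.ofBijective (φ i) (hbij i (by omega))).symm.trans
      (ih.trans (stepE i (by omega)))
  let Ψ : ∀ i, M i ≃ₗ[k] IntervalSum k n m αf βt γt i := fun i =>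
    Nat.rec (psi 0 (Nat.zero_le Lw)) Ψstep i
  have hΨs : ∀ i, Ψ (i+1) = Ψstep i (Ψ i) := fun i => rfl
  have hΨle : ∀ i (hle : i ≤ Lw), Ψ i = psi i hle := by
    intro i hle
    cases i with
    | zero => rfl
    | succ i => rw [hΨs]; exact dif_pos hle
  refine ⟨n, m, αf, βt, γt, fun s => hγ1 (etors s).1, Ψ, ?_⟩
  intro i x
  by_cases h : i + 1 ≤ Lw
  · rw [hΨs, show Ψstep i (Ψ i) = psi (i+1) h from dif_pos h,
      hΨle i (Nat.le_of_succ_le h)]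
    exact key1 i h x
  · have hLwi : Lw ≤ i := by omega
    rw [hΨs, show Ψstep i (Ψ i) = (LinearEquiv.ofBijective (φ i) (hbij i hLwi)).symm.trans
      ((Ψ i).trans (stepE i hLwi)) from dif_neg h]
    simp only [LinearEquiv.trans_apply]
    rw [show (LinearEquiv.ofBijective (φ i) (hbij i hLwi)).symm (φ i x) = x from
      (LinearEquiv.symm_apply_eq _).2 rfl]
    exact hstepE i hLwi (Ψ i x)
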